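/- For n ∈ ℕ with n ≥ 2 and a prime p ≡ 1 (mod n), with p ≥ 5, the congruence (1 − 1/n)_p ≡ (n−1)·(1/n)_p (mod p³) holds in Z_p. -/

import Mathlib

/-!
Put `a = 1/n` and `t = (p - 1)/n`, so that `a + t = p a` and `a + j` is a `p`-adic unit for every
other `j < p`. Reflection gives `(1 - a)_p = -(a - p)_p`; pulling the factor `j = t` out of both
Pochhammer symbols, the difference becomes `p (1 - a) (∏_{j ≠ t} (a + j - p) - ∏_{j ≠ t} (a + j))`.
Expanding the first product to first order in `p`, the bracket is
`-p ∏_{j ≠ t} (a + j) · ∑_{j ≠ t} (a + j)⁻¹` modulo `p²`, and the sum vanishes modulo `p` because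
the `a + j` run through all nonzero residues mod `p`, whose inverses sum to `0` for odd `p`.
-/

open Finset

theorem ascPochhammer_eval_eq_prod_range {R : Type*} [CommSemiring R] (n : ℕ) (r : R) :
    (ascPochhammer R n).eval r = ∏ j ∈ range n, (r + j) := by
  induction n with
  | zero => simp
  | succ n ih => rw [ascPochhammer_succ_eval, prod_range_succ, ih]

theorem ascPochhammer_eval_one_sub {R : Type*} [CommRing R] (n : ℕ) (x : R) :
    (ascPochhammer R n).eval (1 - x) = (-1) ^ n * (ascPochhammer R n).eval (x - n) := by
  rw [← neg_sub, ascPochhammer_eval_neg_eq_descPochhammer, descPochhammer_eval_eq_ascPochhammer,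
    sub_right_comm, sub_add_cancel]

section Products

variable {ι R : Type*} [CommRing R] (q : R) (s : Finset ι)

theorem sq_dvd_prod_one_add_mul_sub (v : ι → R) :
    q ^ 2 ∣ ∏ i ∈ s, (1 + q * v i) - (1 + q * ∑ i ∈ s, v i) := by
  classical
  induction s using Finset.induction_on with
  | empty => simp
  | insert a s ha ih =>
    rw [prod_insert ha, sum_insert ha]
    have h : (1 + q * v a) * ∏ i ∈ s, (1 + q * v i) - (1 + q * (v a + ∑ i ∈ s, v i)) =
        (1 + q * v a) * (∏ i ∈ s, (1 + q * v i) - (1 + q * ∑ i ∈ s, v i)) +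
          q ^ 2 * (v a * ∑ i ∈ s, v i) := by ring
    rw [h]
    exact dvd_add (dvd_mul_of_dvd_right ih _) (dvd_mul_right _ _)

theorem sq_dvd_prod_sub_sub_prod {u : ι → R} (hu : ∀ i ∈ s, IsUnit (u i))
    (hq : q ∣ ∑ i ∈ s, Ring.inverse (u i)) :
    q ^ 2 ∣ ∏ i ∈ s, (u i - q) - ∏ i ∈ s, u i := by
  have hfactor :
      ∏ i ∈ s, (u i - q) = (∏ i ∈ s, u i) * ∏ i ∈ s, (1 + q * -Ring.inverse (u i)) := by
    rw [← prod_mul_distrib]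
    refine prod_congr rfl fun i hi => ?_
    rw [mul_add, mul_one, mul_left_comm, mul_neg, Ring.mul_inverse_cancel _ (hu i hi)]
    ring
  obtain ⟨c, hc⟩ := hq
  have h := sq_dvd_prod_one_add_mul_sub q s fun i => -Ring.inverse (u i)
  rw [sum_neg_distrib, hc] at h
  rw [hfactor, show ∀ P X : R, P * X - P = P * (X - (1 + q * -(q * c))) - q ^ 2 * (P * c) by
    intros; ring]
  exact dvd_sub (dvd_mul_of_dvd_right h _) (dvd_mul_right _ _)

end Products

theorem ZMod.sum_range_natCast {M : Type*} [AddCommMonoid M] (p : ℕ) [NeZero p]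
    (f : ZMod p → M) : ∑ j ∈ range p, f j = ∑ x, f x :=
  sum_nbij' Nat.cast ZMod.val (by simp) (fun x _ => mem_range.2 x.val_lt)
    (fun j hj => ZMod.val_cast_of_lt (mem_range.1 hj)) (fun x _ => ZMod.natCast_zmod_val x)
    (fun _ _ => rfl)

theorem FiniteField.sum_inv_eq_zero {K : Type*} [Field K] [Fintype K]
    (hK : Fintype.card K ≠ 2) : ∑ x : K, x⁻¹ = 0 := by
  rw [show ∑ x : K, x⁻¹ = ∑ x : K, x from Equiv.sum_comp (Equiv.inv K) id]
  simpa using FiniteField.sum_pow_lt_card_sub_one (K := K) (i := 1)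
    (by have := Fintype.one_lt_card (α := K); omega)

namespace PadicInt

variable {p : ℕ} [Fact p.Prime]

theorem toZMod_eq_zero_iff_dvd (x : ℤ_[p]) : toZMod x = 0 ↔ (p : ℤ_[p]) ∣ x := by
  rw [← RingHom.mem_ker, ker_toZMod, maximalIdeal_eq_span_p, Ideal.mem_span_singleton]

theorem isUnit_iff_toZMod_ne_zero (x : ℤ_[p]) : IsUnit x ↔ toZMod x ≠ 0 := by
  rw [ne_eq, ← RingHom.mem_ker, ker_toZMod, IsLocalRing.mem_maximalIdeal, mem_nonunits_iff,
    not_not]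

theorem toZMod_ringInverse (x : ℤ_[p]) : toZMod (Ring.inverse x) = (toZMod x)⁻¹ := by
  by_cases hx : IsUnit x
  · obtain ⟨u, rfl⟩ := hx
    rw [Ring.inverse_unit, map_units_inv]
  · have h0 : toZMod x = 0 := by simpa [isUnit_iff_toZMod_ne_zero] using hx
    rw [Ring.inverse_non_unit _ hx, h0, map_zero, inv_zero]

/-- The non-unit term contributes `Ring.inverse _ = 0`, matching `0⁻¹ = 0` in `ZMod p`, so modulo
`p` this is the sum of the inverses of all residues. -/
theorem dvd_sum_range_ringInverse_add (hp : p ≠ 2) (x : ℤ_[p]) :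
    (p : ℤ_[p]) ∣ ∑ j ∈ range p, Ring.inverse (x + j) := by
  rw [← toZMod_eq_zero_iff_dvd, map_sum]
  simp only [toZMod_ringInverse, map_add, map_natCast]
  rw [ZMod.sum_range_natCast p fun j => (toZMod x + j)⁻¹]
  exact (Equiv.sum_comp (Equiv.addLeft _) (·⁻¹)).trans
    (FiniteField.sum_inv_eq_zero (by rwa [ZMod.card]))

@[norm_cast]
theorem coe_ascPochhammer_eval (m : ℕ) (x : ℤ_[p]) :
    (((ascPochhammer ℤ_[p] m).eval x : ℤ_[p]) : ℚ_[p]) = (ascPochhammer ℚ_[p] m).eval (x : ℚ_[p]) :=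
  ((ascPochhammer_eval₂ Coe.ringHom m _).trans (Polynomial.eval₂_at_apply _ _)).symm

theorem norm_le_pow_iff_dvd (x : ℤ_[p]) (k : ℕ) :
    ‖x‖ ≤ (p : ℝ) ^ (-k : ℤ) ↔ (p : ℤ_[p]) ^ k ∣ x := by
  rw [norm_le_pow_iff_mem_span_pow, Ideal.mem_span_singleton]

theorem isUnit_add_natCast {a : ℤ_[p]} {t j : ℕ} (hat : (p : ℤ_[p]) ∣ a + t) (ht : t < p)
    (hj : j < p) (hjt : j ≠ t) : IsUnit (a + j) := by
  have hat' : toZMod a + t = 0 := by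
    rwa [← map_natCast toZMod t, ← map_add, toZMod_eq_zero_iff_dvd]
  rw [isUnit_iff_toZMod_ne_zero, map_add, map_natCast, eq_neg_of_add_eq_zero_left hat',
    neg_add_eq_sub, sub_ne_zero, Ne, ZMod.natCast_eq_natCast_iff', Nat.mod_eq_of_lt ht,
    Nat.mod_eq_of_lt hj]
  exact hjt

theorem p_pow_three_dvd_ascPochhammer_one_sub_sub (hp : p ≠ 2) {n t : ℕ} (hnt : n * t + 1 = p)
    (ht : t < p) {a : ℤ_[p]} (ha : n * a = 1) :
    (p : ℤ_[p]) ^ 3 ∣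
      (ascPochhammer ℤ_[p] p).eval (1 - a) - (n - 1) * (ascPochhammer ℤ_[p] p).eval a := by
  set s := (range p).erase t
  have hat : a + t = p * a := by
    have hnt' : (n * t + 1 : ℤ_[p]) = p := mod_cast hnt
    linear_combination (-(t : ℤ_[p])) * ha + a * hnt'
  have hunit : ∀ j ∈ s, IsUnit (a + j) := fun j hj =>
    isUnit_add_natCast (hat ▸ dvd_mul_right _ _) ht (mem_range.1 (mem_of_mem_erase hj))
      (ne_of_mem_erase hj)
  have hsum : (p : ℤ_[p]) ∣ ∑ j ∈ s, Ring.inverse (a + j) := by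
    have hnonunit : ¬IsUnit (a + t) := by
      rw [hat]
      exact fun h => p_nonunit (isUnit_of_mul_isUnit_left h)
    rw [sum_erase (range p) (f := fun j : ℕ => Ring.inverse (a + j))
      (Ring.inverse_non_unit _ hnonunit)]
    exact dvd_sum_range_ringInverse_add hp a
  have hsq := sq_dvd_prod_sub_sub_prod (p : ℤ_[p]) s hunit hsum
  rw [ascPochhammer_eval_one_sub, (Fact.out : p.Prime).odd_of_ne_two hp |>.neg_one_pow,
    ascPochhammer_eval_eq_prod_range, ascPochhammer_eval_eq_prod_range,
    ← mul_prod_erase _ _ (mem_range.2 ht), ← mul_prod_erase _ _ (mem_range.2 ht)]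
  have hB : ∏ j ∈ s, (a - p + j) = ∏ j ∈ s, (a + j - p) := prod_congr rfl fun _ _ => by ring
  have hdiff :
      -1 * ((a - p + t) * ∏ j ∈ s, (a + j - p)) - (n - 1) * ((a + t) * ∏ j ∈ s, (a + j)) =
        p * (1 - a) * (∏ j ∈ s, (a + j - p) - ∏ j ∈ s, (a + j)) := by
    linear_combination (-(∏ j ∈ s, (a + j - p) + (n - 1) * ∏ j ∈ s, (a + j))) * hat -
      p * (∏ j ∈ s, (a + j)) * ha
  rw [hB, hdiff, show (p : ℤ_[p]) ^ 3 = p * p ^ 2 by ring]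
  exact mul_dvd_mul (dvd_mul_right _ _) hsq

end PadicInt

/-- For `n ≥ 2` and a prime `p ≥ 5` with `p ≡ 1 (mod n)`,
`(1 - 1/n)_p ≡ (n-1) (1/n)_p (mod p³)`. -/
theorem pochhammer_one_over_n (p : ℕ) [Fact p.Prime] (hp : 5 ≤ p)
    (n : ℕ) (hn : 2 ≤ n) (hmod : p % n = 1) :
    ‖(ascPochhammer ℚ_[p] p).eval (1 - ((n : ℚ_[p]))⁻¹) -
        ((n : ℚ_[p]) - 1) * (ascPochhammer ℚ_[p] p).eval (((n : ℚ_[p]))⁻¹)‖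
      ≤ (p : ℝ) ^ (-3 : ℤ) := by
  have hnt : n * (p / n) + 1 = p := by have := Nat.div_add_mod p n; omega
  have ht : p / n < p := Nat.div_lt_self (by omega) (by omega)
  obtain ⟨u, hu⟩ : IsUnit (n : ℤ_[p]) := by
    rw [PadicInt.isUnit_iff_toZMod_ne_zero, map_natCast]
    intro h0
    simpa [h0] using congrArg (Nat.cast : ℕ → ZMod p) hnt
  have ha : (n : ℤ_[p]) * ↑u⁻¹ = 1 := by rw [← hu, Units.mul_inv]
  have hcoe : ((n : ℚ_[p]))⁻¹ = ((↑u⁻¹ : ℤ_[p]) : ℚ_[p]) :=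
    (eq_inv_of_mul_eq_one_right (mod_cast congrArg ((↑) : ℤ_[p] → ℚ_[p]) ha)).symm
  rw [hcoe]
  exact_mod_cast (PadicInt.norm_le_pow_iff_dvd _ 3).2
    (PadicInt.p_pow_three_dvd_ascPochhammer_one_sub_sub (by omega) hnt ht ha)
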